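/- Let Γ be a group acting on a set M with cut-off function χ, γ ∈ Γ, and let Ψ(c) := f_c be as above, viewed as a map from Lott's complex 𝒞^•_γ(Γ) to the γ-extended Alexander–Spanier complex. Then Ψ is a chain map: Ψ(δc) = ε(Ψ(c)) for all c ∈ 𝒞^k_γ(Γ), where δ is the group cochain differential and ε the extended Alexander–Spanier differential. -/

import Mathlib

/-- Lott's delocalized group cochains. -/
def IsLottCochain {Γ : Type*} [Group Γ] (γ : Γ) (k : ℕ)
    (c : (Fin (k + 1) → Γ) → ℂ) : Prop :=
  (∀ σ : Equiv.Perm (Fin (k + 1)), ∀ g : Fin (k + 1) → Γ,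
      c (g ∘ σ) = ((Equiv.Perm.sign σ : ℤ) : ℂ) * c g) ∧
  (∀ z : Γ, z * γ = γ * z → ∀ g : Fin (k + 1) → Γ, c (fun i => z * g i) = c g) ∧
  (∀ g : Fin (k + 1) → Γ, c (Function.update g 0 (γ * g 0)) = c g)

/-- The simplicial differential on group cochains. -/
noncomputable def lottδ {Γ : Type*} [Group Γ] {k : ℕ} (c : (Fin (k + 1) → Γ) → ℂ) :
    (Fin (k + 2) → Γ) → ℂ :=
  fun g => ∑ i : Fin (k + 2), (-1 : ℂ) ^ (i : ℕ) * c (g ∘ i.succAbove)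

/-- The γ-extended Alexander–Spanier differential. -/
noncomputable def extAS {Γ M : Type*} [Group Γ] [MulAction Γ M] (χ : M → ℂ) {n : ℕ}
    (f : Γ → (Fin (n + 1) → M) → ℂ) : Γ → (Fin (n + 2) → M) → ℂ :=
  fun η xs =>
    (∑ᶠ h : Γ, f (η * h) fun i => xs i.succ) * χ (η⁻¹ • xs 0) +
      ∑ i : Fin (n + 1), (-1 : ℂ) ^ ((i : ℕ) + 1) * f η (xs ∘ (i.succ).succAbove)

/-- The map `Ψ(c) = f_c`. -/
noncomputable def fcMap {Γ M : Type*} [Group Γ] [MulAction Γ M] (χ : M → ℂ) {k : ℕ}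
    (c : (Fin (k + 1) → Γ) → ℂ) : Γ → (Fin (k + 1) → M) → ℂ :=
  fun η xs => ∑ᶠ g : Fin k → Γ,
    c (Fin.cons η g) * χ (η⁻¹ • xs 0) * ∏ i : Fin k, χ ((g i)⁻¹ • xs i.succ)

/-! Expanding `δc` into its faces, `Ψ` turns the `0`-th face into the averaging term of `ε`,
since summing `f_c(ηh, ·)` over `h` and reindexing `ηh ↦ h` reassembles the free first entry of
the cochain. The `(i+1)`-st face no longer depends on the `i`-th group variable, and summing out
that variable against its cut-off factor `χ(γ_i⁻¹ x_i)` gives `1`, which leaves exactly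
`f_c` evaluated at the `(i+1)`-st face of the tuple. -/

open Function

section WeightedTupleSums

variable {G R : Type*} [CommSemiring R] {n : ℕ}

lemma hasFiniteSupport_prod_apply {w : Fin n → G → R} (hw : ∀ j, (w j).HasFiniteSupport) :
    HasFiniteSupport fun g : Fin n → G => ∏ j, w j (g j) := by
  refine (Set.Finite.pi hw).subset fun g hg j _ => ?_
  by_contra h
  exact hg (Finset.prod_eq_zero (Finset.mem_univ j) (notMem_support.mp h))

lemma finsum_finsum_insertNth (i : Fin (n + 1)) {Φ : (Fin (n + 1) → G) → R}
    (hΦ : Φ.HasFiniteSupport) : ∑ᶠ (a : G) (g : Fin n → G), Φ (i.insertNth a g) = ∑ᶠ g, Φ g := by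
  rw [← finsum_comp_equiv (Fin.insertNthEquiv (fun _ => G) i),
    finsum_curry _ (hΦ.fun_comp_of_injective (Equiv.injective _))]
  rfl

lemma finsum_removeNth_mul_prod [NoZeroDivisors R] {w : Fin (n + 1) → G → R}
    (hw : ∀ j, (w j).HasFiniteSupport) (i : Fin (n + 1)) (hi : ∑ᶠ a, w i a = 1)
    (F : (Fin n → G) → R) :
    ∑ᶠ g : Fin (n + 1) → G, F (i.removeNth g) * ∏ j, w j (g j)
      = ∑ᶠ g : Fin n → G, F g * ∏ j, w (i.succAbove j) (g j) := by
  rw [← finsum_finsum_insertNth i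
    ((hasFiniteSupport_prod_apply hw).fun_mul_right fun g => F (i.removeNth g))]
  simp only [Fin.removeNth_insertNth, Fin.prod_univ_succAbove _ i, Fin.insertNth_apply_same,
    Fin.insertNth_apply_succAbove, mul_left_comm (F _)]
  simp only [← mul_finsum, ← finsum_mul, hi, one_mul]

end WeightedTupleSums

section CutOff

variable {Γ M : Type*} [Group Γ] [MulAction Γ M] {χ : M → ℂ}

lemma hasFiniteSupport_mul_prod_cutoff
    (hχfin : ∀ x : M, (support fun h : Γ => χ (h⁻¹ • x)).Finite)
    {n : ℕ} (xs : Fin n → M) (F : (Fin n → Γ) → ℂ) :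
    HasFiniteSupport fun g : Fin n → Γ => F g * ∏ j, χ ((g j)⁻¹ • xs j) :=
  (hasFiniteSupport_prod_apply fun j => hχfin (xs j)).fun_mul_right F

lemma fcMap_sum_mul (hχfin : ∀ x : M, (support fun h : Γ => χ (h⁻¹ • x)).Finite)
    {ι : Type*} (s : Finset ι) (a : ι → ℂ) {k : ℕ} (c : ι → (Fin (k + 1) → Γ) → ℂ)
    (η : Γ) (xs : Fin (k + 1) → M) :
    fcMap χ (fun g => ∑ i ∈ s, a i * c i g) η xs = ∑ i ∈ s, a i * fcMap χ (c i) η xs := by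
  simp only [fcMap, Finset.sum_mul, mul_finsum]
  rw [finsum_sum_comm]
  · simp only [mul_assoc]
  · exact fun i _ => hasFiniteSupport_mul_prod_cutoff hχfin (fun j => xs j.succ)
      fun g => a i * c i (Fin.cons η g) * χ (η⁻¹ • xs 0)

lemma fcMap_lottδ (hχfin : ∀ x : M, (support fun h : Γ => χ (h⁻¹ • x)).Finite)
    {k : ℕ} (c : (Fin (k + 1) → Γ) → ℂ) (η : Γ) (xs : Fin (k + 2) → M) :
    fcMap χ (lottδ c) η xs
      = ∑ i : Fin (k + 2), (-1 : ℂ) ^ (i : ℕ) * fcMap χ (fun g => c (g ∘ i.succAbove)) η xs :=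
  fcMap_sum_mul hχfin _ _ _ η xs

lemma finsum_fcMap_mul_left (hχfin : ∀ x : M, (support fun h : Γ => χ (h⁻¹ • x)).Finite)
    {k : ℕ} (c : (Fin (k + 1) → Γ) → ℂ) (η : Γ) (xs : Fin (k + 1) → M) :
    ∑ᶠ h, fcMap χ c (η * h) xs = ∑ᶠ g, c g * ∏ j, χ ((g j)⁻¹ • xs j) := by
  rw [← finsum_finsum_insertNth 0 (hasFiniteSupport_mul_prod_cutoff hχfin xs c)]
  refine (finsum_comp_equiv (Equiv.mulLeft η) (f := fun a => fcMap χ c a xs)).trans ?_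
  simp only [fcMap, Fin.insertNth_zero', Fin.prod_univ_succ, Fin.cons_zero, Fin.cons_succ,
    mul_assoc]

lemma fcMap_comp_zero_succAbove
    (hχfin : ∀ x : M, (support fun h : Γ => χ (h⁻¹ • x)).Finite)
    {k : ℕ} (c : (Fin (k + 1) → Γ) → ℂ) (η : Γ) (xs : Fin (k + 2) → M) :
    fcMap χ (fun g => c (g ∘ (0 : Fin (k + 2)).succAbove)) η xs
      = (∑ᶠ h, fcMap χ c (η * h) fun i => xs i.succ) * χ (η⁻¹ • xs 0) := by
  rw [finsum_fcMap_mul_left hχfin, finsum_mul]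
  refine finsum_congr fun g => ?_
  simp only [Fin.succAbove_zero, Fin.cons_comp_succ]
  ring

lemma fcMap_comp_succ_succAbove (hχfin : ∀ x : M, (support fun h : Γ => χ (h⁻¹ • x)).Finite)
    (hχsum : ∀ x : M, ∑ᶠ h : Γ, χ (h⁻¹ • x) = 1)
    {k : ℕ} (c : (Fin (k + 1) → Γ) → ℂ) (i : Fin (k + 1)) (η : Γ) (xs : Fin (k + 2) → M) :
    fcMap χ (fun g => c (g ∘ i.succ.succAbove)) η xs = fcMap χ c η (xs ∘ i.succ.succAbove) := by
  simp only [fcMap, Fin.cons_comp_succ_succAbove]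
  rw [finsum_removeNth_mul_prod (fun j => hχfin (xs j.succ)) i (hχsum _)
    fun g => c (Fin.cons η g) * χ (η⁻¹ • xs 0)]
  simp

end CutOff

theorem Psi_chain_map_general (Γ M : Type*) [Group Γ] [MulAction Γ M] (χ : M → ℂ)
    (hχfin : ∀ x : M, (Function.support fun h : Γ => χ (h⁻¹ • x)).Finite)
    (hχsum : ∀ x : M, ∑ᶠ h : Γ, χ (h⁻¹ • x) = 1)
    (k : ℕ) (c : (Fin (k + 1) → Γ) → ℂ) :
    fcMap χ (lottδ c) = extAS χ (fcMap χ c) := by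
  funext η xs
  rw [fcMap_lottδ hχfin, Fin.sum_univ_succ, fcMap_comp_zero_succAbove hχfin]
  simp only [extAS, fcMap_comp_succ_succAbove hχfin hχsum, Fin.val_zero, pow_zero, one_mul,
    Fin.val_succ]

/-- `Ψ` is a chain map from Lott's complex to the γ-extended Alexander–Spanier complex:
`Ψ(δc) = ε(Ψ(c))`. -/
theorem Psi_chain_map (Γ M : Type*) [Group Γ] [MulAction Γ M] (γ : Γ) (χ : M → ℂ)
    (hχfin : ∀ x : M, (Function.support fun h : Γ => χ (h⁻¹ • x)).Finite)
    (hχsum : ∀ x : M, ∑ᶠ h : Γ, χ (h⁻¹ • x) = 1)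
    (k : ℕ) (c : (Fin (k + 1) → Γ) → ℂ) (hc : IsLottCochain γ k c) :
    fcMap χ (lottδ c) = extAS χ (fcMap χ c) :=
  Psi_chain_map_general Γ M χ hχfin hχsum k c
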